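/- arXiv:math/0102207 — 3 statements merged into one kernel-verified Lean document; each statement's English description precedes it below -/
import Mathlib

section
/- For all real k ≠ 0 and δ > 0, both roots of the quadratic λ² + (k² + δk² + k⁴/3)λ + (1/12)k⁶ + (1/3)δk⁶ = 0 are real and strictly negative. -/
/-!
The discriminant of the quadratic is positive, so both roots are real: a non-real root `x + iy`
of `z² + bz + c` would satisfy `2x + b = 0` and hence `y² = c - b²/4 < 0`. Since the coefficients
are positive, a real root cannot be nonnegative.
-/

theorem Complex.im_eq_zero_of_sq_add_mul_add_eq_zero {b c : ℝ} (hdisc : 4 * c < b ^ 2) {z : ℂ}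
    (hz : z ^ 2 + (b : ℂ) * z + (c : ℂ) = 0) : z.im = 0 := by
  have hre : z.re ^ 2 - z.im ^ 2 + b * z.re + c = 0 := by
    simpa [sq, Complex.mul_re] using congrArg Complex.re hz
  have him : z.im * (2 * z.re + b) = 0 := by
    have := congrArg Complex.im hz
    simp only [sq, Complex.add_im, Complex.mul_im, Complex.ofReal_re, Complex.ofReal_im,
      Complex.zero_im] at this
    linarith
  rcases mul_eq_zero.mp him with h | h
  · exact h
  · have hx : z.re = -b / 2 := by linarith
    rw [hx] at hre
    nlinarith [sq_nonneg z.im]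

theorem neg_of_sq_add_mul_add_eq_zero {b c x : ℝ} (hb : 0 ≤ b) (hc : 0 < c)
    (hx : x ^ 2 + b * x + c = 0) : x < 0 := by
  by_contra! h
  nlinarith [mul_nonneg hb h]

theorem Complex.im_eq_zero_and_re_neg_of_sq_add_mul_add_eq_zero {b c : ℝ} (hb : 0 ≤ b)
    (hc : 0 < c) (hdisc : 4 * c < b ^ 2) {z : ℂ} (hz : z ^ 2 + (b : ℂ) * z + (c : ℂ) = 0) :
    z.im = 0 ∧ z.re < 0 := by
  have him := Complex.im_eq_zero_of_sq_add_mul_add_eq_zero hdisc hz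
  refine ⟨him, neg_of_sq_add_mul_add_eq_zero hb hc ?_⟩
  have hre : z.re ^ 2 - z.im ^ 2 + b * z.re + c = 0 := by
    simpa [sq, Complex.mul_re] using congrArg Complex.re hz
  rwa [him, zero_pow two_ne_zero, sub_zero] at hre

theorem four_mul_lt_sq_thinFilm_coeffs {k δ : ℝ} (hk : k ≠ 0) (hδ : 0 < δ) :
    4 * ((1 / 12) * k ^ 6 + (1 / 3) * δ * k ^ 6) < (k ^ 2 + δ * k ^ 2 + k ^ 4 / 3) ^ 2 := by
  have hdisc : (k ^ 2 + δ * k ^ 2 + k ^ 4 / 3) ^ 2 - 4 * ((1 / 12) * k ^ 6 + (1 / 3) * δ * k ^ 6)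
      = k ^ 4 * ((k ^ 2 / 3 + (1 - 2 * δ) / 2) ^ 2 + 3 * (1 + 4 * δ) / 4) := by
    ring
  have : 0 < k ^ 4 * ((k ^ 2 / 3 + (1 - 2 * δ) / 2) ^ 2 + 3 * (1 + 4 * δ) / 4) := by
    positivity
  linarith

/-- For all real k ≠ 0 and δ > 0, both roots of the quadratic
λ² + (k² + δk² + k⁴/3)λ + (1/12)k⁶ + (1/3)δk⁶ = 0 are real and strictly negative. -/
theorem stmt0 (k δ : ℝ) (hk : k ≠ 0) (hδ : 0 < δ) (z : ℂ)
    (hz : z ^ 2 + ((k ^ 2 + δ * k ^ 2 + k ^ 4 / 3 : ℝ) : ℂ) * z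
        + (((1 / 12) * k ^ 6 + (1 / 3) * δ * k ^ 6 : ℝ) : ℂ) = 0) :
    z.im = 0 ∧ z.re < 0 :=
  Complex.im_eq_zero_and_re_neg_of_sq_add_mul_add_eq_zero (by positivity) (by positivity)
    (four_mul_lt_sq_thinFilm_coeffs hk hδ) hz
end

section
/- If δ = 0, then the characteristic polynomial λ² + (k² + k⁴/3)λ + (1/12)k⁶ has, for each k ≠ 0, two real roots, both roots are strictly negative, and the larger root λ₊ satisfies λ₊ ≥ −k⁴/6 for all k with 0 < |k| ≤ 1. -/
/-- For δ = 0 the characteristic polynomial λ² + (k² + k⁴/3)λ + (1/12)k⁶ has,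
for each k ≠ 0, two real strictly negative roots, and the larger root satisfies
λ₊ ≥ −k⁴/6 whenever 0 < |k| ≤ 1. -/
theorem stmt5 (k : ℝ) (hk : k ≠ 0) :
    (∀ z : ℂ, z^2 + ((k^2 + k^4/3 : ℝ) : ℂ) * z + (((1/12) * k^6 : ℝ) : ℂ) = 0 →
      z.im = 0 ∧ z.re < 0) ∧
    (|k| ≤ 1 →
      (-(k^2 + k^4/3) + Real.sqrt ((k^2 + k^4/3)^2 - 4*((1/12) * k^6))) / 2
        ≥ -k^4/6) := by
  have hk2 : (0:ℝ) < k^2 := by positivity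
  set b : ℝ := k^2 + k^4/3 with hb_def
  set c : ℝ := (1/12) * k^6 with hc_def
  have hb : 0 < b := by positivity
  have hc : 0 < c := by positivity
  have hDval : b^2 - 4*c = k^4 + k^6/3 + k^8/9 := by rw [hb_def, hc_def]; ring
  have hD0 : (0:ℝ) ≤ b^2 - 4*c := by rw [hDval]; positivity
  set s : ℝ := Real.sqrt (b^2 - 4*c) with hs_def
  have hs0 : 0 ≤ s := Real.sqrt_nonneg _
  have hs2 : s^2 = b^2 - 4*c := Real.sq_sqrt hD0
  have hsb : s < b := by nlinarith
  constructor
  · intro z hz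
    set r₁ : ℝ := (-b - s)/2 with hr1
    set r₂ : ℝ := (-b + s)/2 with hr2
    have h1 : r₁ + r₂ = -b := by rw [hr1, hr2]; ring
    have h2 : r₁ * r₂ = c := by rw [hr1, hr2]; nlinarith
    have h1c : ((r₁:ℂ) + (r₂:ℂ)) = -(b:ℂ) := by exact_mod_cast congrArg Complex.ofReal h1
    have h2c : ((r₁:ℂ) * (r₂:ℂ)) = (c:ℂ) := by exact_mod_cast congrArg Complex.ofReal h2
    have hfac : (z - (r₁:ℂ)) * (z - (r₂:ℂ)) = 0 := by
      rw [← hz]; linear_combination (-z) * h1c + h2c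
    have hr1neg : r₁ < 0 := by rw [hr1]; nlinarith
    have hr2neg : r₂ < 0 := by rw [hr2]; nlinarith
    rcases mul_eq_zero.mp hfac with h | h
    · simp [sub_eq_zero.mp h, hr1neg]
    · simp [sub_eq_zero.mp h, hr2neg]
  · intro _
    have hk4 : Real.sqrt (b^2 - 4*c) ≥ k^2 := by
      rw [show (k^2 : ℝ) = Real.sqrt ((k^2)^2) by rw [Real.sqrt_sq hk2.le]]
      apply Real.sqrt_le_sqrt
      rw [hDval]; nlinarith
    have : s ≥ k^2 := hk4
    rw [ge_iff_le, div_le_div_iff₀ (by norm_num) (by norm_num : (0:ℝ) < 2)]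
    nlinarith
end

section
/- For all real k and δ ≥ 0, both roots λ of λ² + (k² + δk² + k⁴/3)λ + (1/12)k⁶ + (1/3)δk⁶ = 0 satisfy Re(λ) ≤ 0, with equality only when k = 0; hence the linearised model is stable for all wavenumbers. -/
/-! A monic real quadratic with nonnegative coefficients has roots in the closed left
half-plane: a root is either real, and then it cannot be positive, or it is one of a
conjugate pair, whose real part is `-b / 2`. With positive coefficients the half-plane
is open. For the characteristic quadratic both coefficients are positive exactly when
`k ≠ 0`. -/

namespace Complex

variable {b c : ℝ} {z : ℂ}

theorem re_im_eqs_of_sq_add_mul_add_eq_zero (h : z ^ 2 + b * z + c = 0) :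
    z.re ^ 2 - z.im ^ 2 + b * z.re + c = 0 ∧ z.im * (2 * z.re + b) = 0 := by
  have hre := congrArg re h
  have him := congrArg im h
  simp only [add_re, add_im, mul_re, mul_im, ofReal_re, ofReal_im, sq, zero_re, zero_im]
    at hre him
  exact ⟨by linear_combination hre, by linear_combination him⟩

theorem re_nonpos_of_sq_add_mul_add_eq_zero (hb : 0 ≤ b) (hc : 0 ≤ c)
    (h : z ^ 2 + b * z + c = 0) : z.re ≤ 0 := by
  obtain ⟨hre, him⟩ := re_im_eqs_of_sq_add_mul_add_eq_zero h
  rcases mul_eq_zero.mp him with hreal | hpair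
  · rw [hreal] at hre
    nlinarith
  · linarith

theorem re_neg_of_sq_add_mul_add_eq_zero (hb : 0 < b) (hc : 0 < c)
    (h : z ^ 2 + b * z + c = 0) : z.re < 0 := by
  obtain ⟨hre, him⟩ := re_im_eqs_of_sq_add_mul_add_eq_zero h
  rcases mul_eq_zero.mp him with hreal | hpair
  · rw [hreal] at hre
    nlinarith
  · linarith

end Complex

/-- For all real k and δ ≥ 0, both roots of the characteristic quadratic have
Re(λ) ≤ 0, with equality only when k = 0. -/
theorem stmt7 (k δ : ℝ) (hδ : 0 ≤ δ) (z : ℂ)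
    (hz : z^2 + ((k^2 + δ*k^2 + k^4/3 : ℝ) : ℂ) * z
        + (((1/12)*k^6 + (1/3)*δ*k^6 : ℝ) : ℂ) = 0) :
    z.re ≤ 0 ∧ (z.re = 0 → k = 0) := by
  by_cases hk : k = 0
  · exact ⟨Complex.re_nonpos_of_sq_add_mul_add_eq_zero (by positivity) (by positivity) hz,
      fun _ ↦ hk⟩
  · have hneg := Complex.re_neg_of_sq_add_mul_add_eq_zero (by positivity) (by positivity) hz
    exact ⟨hneg.le, fun h ↦ absurd h hneg.ne⟩
end
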